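/- arXiv:2108.04404 — 3 statements merged into one kernel-verified Lean document; each statement's English description precedes it below -/
import Mathlib

section
/- Let a_1, …, a_n be nonzero even integers (n ≥ 1). Then for every 1 ≤ j ≤ n the tail value [a_j, …, a_n] is well-defined and satisfies |[a_j, …, a_n]| > 1. In particular the full continued fraction [a_1, …, a_n] is a well-defined rational number of absolute value greater than 1; writing it in lowest terms as α/β, one has |α| > |β|. (Remark 4.1(i): if α/β = [c_1, d_1, c_2, …, d_n, c_{n+1}] with all entries nonzero even integers, then |α| ≥ |β|.) -/
/-! Each tail is `a + 1/t` with `|a| ≥ 2` and, inductively, `|1/t| < 1`, so `|a + 1/t| > 1`. -/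

/-- The value of a finite continued fraction `[a_1, …, a_n] = a_1 + 1/(a_2 + 1/(⋯ + 1/a_n))`,
with junk value `0` on the empty list. -/
def cfVal : List ℤ → ℚ
  | [] => 0
  | [a] => (a : ℚ)
  | a :: b :: l => (a : ℚ) + (cfVal (b :: l))⁻¹

lemma Int.two_le_abs_of_even {a : ℤ} (h0 : a ≠ 0) (he : Even a) : 2 ≤ |a| :=
  Int.le_of_dvd (abs_pos.2 h0) ((even_iff_two_dvd.1 he).trans (self_dvd_abs a))

lemma one_lt_abs_add_inv {K : Type*} [Field K] [LinearOrder K] [IsStrictOrderedRing K]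
    {a t : K} (ha : 2 ≤ |a|) (ht : 1 < |t|) : 1 < |a + t⁻¹| := by
  have hinv : |t⁻¹| < 1 := by
    rw [abs_inv]
    exact inv_lt_one_of_one_lt₀ ht
  have := abs_sub_abs_le_abs_add a t⁻¹
  linarith

lemma one_lt_abs_cfVal {l : List ℤ} (hne : l ≠ []) (hl : ∀ x ∈ l, x ≠ 0 ∧ Even x) :
    1 < |cfVal l| := by
  induction l with
  | nil => exact absurd rfl hne
  | cons a t ih =>
    obtain ⟨ha0, haeven⟩ := hl a List.mem_cons_self
    have ha : (2 : ℚ) ≤ |(a : ℚ)| := by exact_mod_cast Int.two_le_abs_of_even ha0 haeven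
    cases t with
    | nil =>
      show 1 < |(a : ℚ)|
      linarith
    | cons b u =>
      exact one_lt_abs_add_inv ha
        (ih (List.cons_ne_nil b u) fun x hx => hl x (List.mem_cons_of_mem a hx))

lemma Rat.den_lt_abs_num_of_one_lt_abs {q : ℚ} (hq : 1 < |q|) : (q.den : ℤ) < |q.num| := by
  have := mt (Rat.num_le_denom_iff (q := |q|)).1 (not_le.2 hq)
  rwa [Rat.num_abs_eq_abs_num, Rat.den_abs_eq_den, not_le] at this

/-- **Remark 4.1(i).**  If `L = (a_1, …, a_n)` is a nonempty list of nonzero even integers,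
then every tail value `[a_j, …, a_n]` (i.e. the value of every nonempty suffix of `L`) has
absolute value greater than `1` — in particular all proper tail values are nonzero, so the
continued fraction is well-defined — and writing the full value `[a_1, …, a_n]` in lowest
terms as `α/β` one has `|α| > |β|`. -/
theorem even_cf_tails_gt_one (L : List ℤ) (hne : L ≠ [])
    (hL : ∀ x ∈ L, x ≠ 0 ∧ Even x) :
    (∀ l, l ≠ [] → l <:+ L → 1 < |cfVal l|) ∧ ((cfVal L).den : ℤ) < |(cfVal L).num| := by
  refine ⟨fun l hl hsuf => one_lt_abs_cfVal hl fun x hx => hL x (hsuf.subset hx), ?_⟩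
  exact Rat.den_lt_abs_num_of_one_lt_abs (one_lt_abs_cfVal hne hL)
end

section
/- The continued fraction value map is injective on finite lists of nonzero even integers: if (a_1, …, a_n) and (b_1, …, b_m) are lists of nonzero even integers (all their continued fractions being well-defined) and [a_1, …, a_n] = [b_1, …, b_m] in ℚ, then n = m and a_i = b_i for every i. (Remark 4.1(ii): the sequence of nonzero even integers representing a rational number α/β by a continued fraction is unique.) -/
theorem cfVal_cons (a : ℤ) (l : List ℤ) : cfVal (a :: l) = (a : ℚ) + (cfVal l)⁻¹ := by
  cases l <;> simp [cfVal]

theorem two_le_abs_q (a : ℤ) (ha : a ≠ 0) (he : Even a) : (2 : ℚ) ≤ |(a : ℚ)| := by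
  obtain ⟨k, hk⟩ := he
  have h : a ≤ -2 ∨ 2 ≤ a := by omega
  rcases h with h | h
  · rw [abs_of_nonpos (by exact_mod_cast (by omega : a ≤ 0))]
    have : (a : ℚ) ≤ -2 := by exact_mod_cast h
    linarith
  · rw [abs_of_nonneg (by exact_mod_cast (by omega : (0:ℤ) ≤ a))]
    exact_mod_cast h

theorem one_lt_abs_cfVal_s6 : ∀ (L : List ℤ), L ≠ [] → (∀ x ∈ L, x ≠ 0 ∧ Even x) →
    1 < |cfVal L|
  | [], h, _ => absurd rfl h
  | [a], _, hL => by
      obtain ⟨ha, he⟩ := hL a (by simp)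
      have := two_le_abs_q a ha he
      simp only [cfVal]
      linarith
  | a :: b :: l, _, hL => by
      obtain ⟨ha, he⟩ := hL a (by simp)
      have h2' := two_le_abs_q a ha he
      have hrec : 1 < |cfVal (b :: l)| :=
        one_lt_abs_cfVal_s6 (b :: l) (by simp) (fun x hx => hL x (List.mem_cons_of_mem a hx))
      have hinv : |(cfVal (b :: l))⁻¹| < 1 := by
        rw [abs_inv, inv_lt_one_iff₀]; right; exact hrec
      show 1 < |(a : ℚ) + (cfVal (b :: l))⁻¹|
      set x := (cfVal (b :: l))⁻¹
      have := abs_sub_abs_le_abs_sub (a : ℚ) (-x)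
      rw [abs_neg, sub_neg_eq_add] at this
      linarith

theorem abs_inv_cfVal_lt_one (l : List ℤ) (hl : ∀ x ∈ l, x ≠ 0 ∧ Even x) :
    |(cfVal l)⁻¹| < 1 := by
  cases l with
  | nil => simp [cfVal]
  | cons b m =>
    have := one_lt_abs_cfVal_s6 (b :: m) (by simp) hl
    rw [abs_inv, inv_lt_one_iff₀]
    right; exact this

theorem cfVal_ne_zero (l : List ℤ) (hne : l ≠ []) (hl : ∀ x ∈ l, x ≠ 0 ∧ Even x) :
    cfVal l ≠ 0 := by
  have := one_lt_abs_cfVal_s6 l hne hl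
  intro h0
  rw [h0] at this
  simp at this
  exact absurd this (by norm_num)

/-- **Remark 4.1(ii).**  The continued fraction value map is injective on finite lists of
nonzero even integers: if two such lists have the same continued fraction value in `ℚ`,
then they have the same length and the same entries. -/
theorem even_cf_injective (L M : List ℤ)
    (hL : ∀ x ∈ L, x ≠ 0 ∧ Even x) (hM : ∀ x ∈ M, x ≠ 0 ∧ Even x)
    (h : cfVal L = cfVal M) : L = M := by
  induction L generalizing M with
  | nil =>
    cases M with
    | nil => rfl
    | cons b m =>
      exfalso
      exact cfVal_ne_zero (b :: m) (by simp) hM (by rw [← h]; simp [cfVal])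
  | cons a l ih =>
    cases M with
    | nil =>
      exfalso
      exact cfVal_ne_zero (a :: l) (by simp) hL (by rw [h]; simp [cfVal])
    | cons b m =>
      rw [cfVal_cons, cfVal_cons] at h
      have hl' : ∀ x ∈ l, x ≠ 0 ∧ Even x := fun x hx => hL x (by simp [hx])
      have hm' : ∀ x ∈ m, x ≠ 0 ∧ Even x := fun x hx => hM x (by simp [hx])
      have hx := abs_inv_cfVal_lt_one l hl'
      have hy := abs_inv_cfVal_lt_one m hm'
      obtain ⟨-, ka, hka⟩ := hL a (by simp)
      obtain ⟨-, kb, hkb⟩ := hM b (by simp)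
      have habq : |(a : ℚ) - (b : ℚ)| < 2 := by
        have hsub : (a : ℚ) - (b : ℚ) = (cfVal m)⁻¹ - (cfVal l)⁻¹ := by linarith
        rw [hsub]
        calc |(cfVal m)⁻¹ - (cfVal l)⁻¹| ≤ |(cfVal m)⁻¹| + |(cfVal l)⁻¹| := abs_sub _ _
        _ < 2 := by linarith
      have hab : a = b := by
        rw [abs_lt] at habq
        have h1 : -2 < a - b := by exact_mod_cast (by push_cast; linarith : (-2:ℚ) < ((a - b : ℤ) : ℚ))
        have h2 : (a - b : ℤ) < 2 := by exact_mod_cast (by push_cast; linarith : ((a - b : ℤ) : ℚ) < 2)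
        omega
      subst hab
      have hinv : (cfVal l)⁻¹ = (cfVal m)⁻¹ := by linarith
      congr 1
      cases l with
      | nil =>
        cases m with
        | nil => rfl
        | cons c m' =>
          exfalso
          have hm0 := cfVal_ne_zero (c :: m') (by simp) hm'
          have : (cfVal (c :: m'))⁻¹ = 0 := by rw [← hinv]; simp [cfVal]
          exact hm0 (inv_eq_zero.mp this)
      | cons c l' =>
        have hl0 := cfVal_ne_zero (c :: l') (by simp) hl'
        cases m with
        | nil =>
          exfalso
          have : (cfVal (c :: l'))⁻¹ = 0 := by rw [hinv]; simp [cfVal]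
          exact hl0 (inv_eq_zero.mp this)
        | cons d m' =>
          exact ih (d :: m') hl' hm' (inv_injective hinv)
end

section
/- The expansion map is injective on odd-length lists of nonzero even integers: if A = (c_1, d_1, c_2, …, d_n, c_{n+1}) and A' = (c'_1, d'_1, …, d'_m, c'_{m+1}) are lists of nonzero even integers of odd lengths 2n+1 and 2m+1 respectively, and their expanded forms coincide, A_e = A'_e, then n = m and A = A'. (This expresses the paper's claim that for a sequence A of nonzero even integers, the contraction of the expanded form recovers A: (A_e)_c = A.) -/
def block (c : ℤ) : List ℤ :=
  List.intersperse 0 (List.replicate (c.natAbs / 2) (2 * c.sign))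

def oddSeq : ℤ → List (ℤ × ℤ) → List ℤ
  | c, [] => [c]
  | c, (d, c') :: r => c :: d :: oddSeq c' r

def expandSeq : ℤ → List (ℤ × ℤ) → List ℤ
  | c, [] => block c
  | c, (d, c') :: r => block c ++ d :: expandSeq c' r

lemma self_mem_oddSeq (c : ℤ) (r : List (ℤ × ℤ)) : c ∈ oddSeq c r := by
  cases r with
  | nil => simp [oddSeq]
  | cons p r => obtain ⟨d, c'⟩ := p; simp [oddSeq]

lemma natAbs_facts (c : ℤ) (h0 : c ≠ 0) (he : Even c) : 2 ≤ c.natAbs ∧ c.natAbs % 2 = 0 := by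
  have h1 : Even c.natAbs := Int.natAbs_even.mpr he
  have h2 : c.natAbs ≠ 0 := Int.natAbs_ne_zero.mpr h0
  obtain ⟨k, hk⟩ := h1
  omega

lemma block_small (c : ℤ) (h : c.natAbs = 2) : block c = [2 * c.sign] := by
  simp [block, h]

lemma block_big (c : ℤ) (h : 4 ≤ c.natAbs) :
    block c = 2 * c.sign :: 0 :: block (c - 2 * c.sign) := by
  have h0 : c ≠ 0 := by intro h'; simp [h'] at h
  rcases lt_or_gt_of_ne h0 with hc | hc
  · have hs : c.sign = -1 := Int.sign_eq_neg_one_of_neg hc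
    have hlt : c - 2 * c.sign < 0 := by rw [hs]; omega
    have hs2 : (c - 2 * c.sign).sign = -1 := Int.sign_eq_neg_one_of_neg hlt
    have hna : (c - 2 * c.sign).natAbs = c.natAbs - 2 := by
      rw [hs]; omega
    have hn : c.natAbs / 2 = (c.natAbs - 2) / 2 + 1 := by omega
    rw [block, block, hs2, hna, hn, hs]
    have h2 : 1 ≤ (c.natAbs - 2) / 2 := by omega
    obtain ⟨m, hm⟩ : ∃ m, (c.natAbs - 2) / 2 = m + 1 := ⟨_, (Nat.succ_pred_eq_of_pos h2).symm⟩
    rw [hm]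
    simp [List.replicate_succ, List.intersperse]
  · have hs : c.sign = 1 := Int.sign_eq_one_of_pos hc
    have hlt : 0 < c - 2 * c.sign := by rw [hs]; omega
    have hs2 : (c - 2 * c.sign).sign = 1 := Int.sign_eq_one_of_pos hlt
    have hna : (c - 2 * c.sign).natAbs = c.natAbs - 2 := by
      rw [hs]; omega
    have hn : c.natAbs / 2 = (c.natAbs - 2) / 2 + 1 := by omega
    rw [block, block, hs2, hna, hn, hs]
    have h2 : 1 ≤ (c.natAbs - 2) / 2 := by omega
    obtain ⟨m, hm⟩ : ∃ m, (c.natAbs - 2) / 2 = m + 1 := ⟨_, (Nat.succ_pred_eq_of_pos h2).symm⟩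
    rw [hm]
    simp [List.replicate_succ, List.intersperse]

lemma expand_big (c : ℤ) (r : List (ℤ × ℤ)) (h : 4 ≤ c.natAbs) :
    expandSeq c r = 2 * c.sign :: 0 :: expandSeq (c - 2 * c.sign) r := by
  cases r with
  | nil => simp [expandSeq, block_big c h]
  | cons p r => obtain ⟨d, c'⟩ := p; simp [expandSeq, block_big c h]

lemma oddSeq_replace {P : ℤ → Prop} {c c2 : ℤ} {r : List (ℤ × ℤ)}
    (h : ∀ x ∈ oddSeq c r, P x) (h2 : P c2) : ∀ x ∈ oddSeq c2 r, P x := by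
  cases r with
  | nil => intro x hx; simp [oddSeq] at hx; subst hx; exact h2
  | cons p r =>
    obtain ⟨d, c'⟩ := p
    intro x hx
    simp only [oddSeq, List.mem_cons] at hx
    rcases hx with hx | hx | hx
    · subst hx; exact h2
    · rw [hx]; exact h d (by simp [oddSeq])
    · exact h x (by simp [oddSeq, hx])

lemma aux : ∀ (N : ℕ) (c c' : ℤ) (r r' : List (ℤ × ℤ)),
    (expandSeq c r).length ≤ N →
    (∀ x ∈ oddSeq c r, x ≠ 0 ∧ Even x) →
    (∀ x ∈ oddSeq c' r', x ≠ 0 ∧ Even x) →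
    expandSeq c r = expandSeq c' r' → c = c' ∧ r = r' := by
  intro N
  induction N with
  | zero =>
    intro c c' r r' hlen hA hA' h
    exfalso
    obtain ⟨hc0, hce⟩ := hA c (self_mem_oddSeq c r)
    obtain ⟨h2, _⟩ := natAbs_facts c hc0 hce
    have h1 : 1 ≤ c.natAbs / 2 := by omega
    obtain ⟨m, hm⟩ : ∃ m, c.natAbs / 2 = m + 1 := ⟨_, (Nat.succ_pred_eq_of_pos h1).symm⟩
    have : block c ≠ [] := by
      rw [block, hm]
      cases m <;> simp [List.replicate_succ, List.intersperse]
    cases r with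
    | nil =>
      rw [expandSeq] at hlen
      exact this (List.length_eq_zero_iff.mp (Nat.le_zero.mp hlen))
    | cons p r => obtain ⟨d, c₂⟩ := p; simp [expandSeq] at hlen
  | succ N ih =>
    intro c c' r r' hlen hA hA' h
    obtain ⟨hc0, hce⟩ := hA c (self_mem_oddSeq c r)
    obtain ⟨hc0', hce'⟩ := hA' c' (self_mem_oddSeq c' r')
    obtain ⟨hn2, hnm⟩ := natAbs_facts c hc0 hce
    obtain ⟨hn2', hnm'⟩ := natAbs_facts c' hc0' hce'
    have hcase : c.natAbs = 2 ∨ 4 ≤ c.natAbs := by omega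
    have hcase' : c'.natAbs = 2 ∨ 4 ≤ c'.natAbs := by omega
    rcases hcase with h2 | h4
    · rcases hcase' with h2' | h4'
      · -- both blocks are singletons
        have hb : block c = [2 * c.sign] := block_small c h2
        have hb' : block c' = [2 * c'.sign] := block_small c' h2'
        have hsc : c = 2 * c.sign := by
          have := Int.sign_mul_natAbs c; rw [h2] at this; omega
        have hsc' : c' = 2 * c'.sign := by
          have := Int.sign_mul_natAbs c'; rw [h2'] at this; omega
        cases r with
        | nil =>
          cases r' with
          | nil =>
            simp [expandSeq, hb, hb'] at h
            exact ⟨by omega, rfl⟩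
          | cons p' r' =>
            obtain ⟨d', c₂'⟩ := p'
            simp [expandSeq, hb, hb'] at h
        | cons p r =>
          obtain ⟨d, c₂⟩ := p
          cases r' with
          | nil =>
            simp [expandSeq, hb, hb'] at h
          | cons p' r' =>
            obtain ⟨d', c₂'⟩ := p'
            simp only [expandSeq, hb, hb', List.cons_append, List.nil_append,
              List.cons.injEq] at h
            obtain ⟨hs, hd, hrest⟩ := h
            have hcc : c = c' := by omega
            have hlen2 : (expandSeq c₂ r).length ≤ N := by
              simp only [expandSeq, hb, List.cons_append, List.nil_append,
                List.length_cons] at hlen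
              omega
            have hA2 : ∀ x ∈ oddSeq c₂ r, x ≠ 0 ∧ Even x := by
              intro x hx; exact hA x (by simp [oddSeq, hx])
            have hA2' : ∀ x ∈ oddSeq c₂' r', x ≠ 0 ∧ Even x := by
              intro x hx; exact hA' x (by simp [oddSeq, hx])
            obtain ⟨hc2, hr2⟩ := ih c₂ c₂' r r' hlen2 hA2 hA2' hrest
            exact ⟨hcc, by rw [hd, hc2, hr2]⟩
      · -- c small, c' big : contradiction
        exfalso
        rw [expand_big c' r' h4'] at h
        cases r with
        | nil =>
          rw [expandSeq, block_small c h2] at h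
          simp at h
        | cons p r =>
          obtain ⟨d, c₂⟩ := p
          rw [expandSeq, block_small c h2] at h
          simp only [List.cons_append, List.nil_append, List.cons.injEq] at h
          have hd0 : d ≠ 0 := (hA d (by simp [oddSeq])).1
          exact hd0 h.2.1
    · rcases hcase' with h2' | h4'
      · -- c big, c' small : contradiction (symmetric)
        exfalso
        rw [expand_big c r h4] at h
        cases r' with
        | nil =>
          rw [expandSeq, block_small c' h2'] at h
          simp at h
        | cons p' r' =>
          obtain ⟨d', c₂'⟩ := p'
          rw [expandSeq, block_small c' h2'] at h
          simp only [List.cons_append, List.nil_append, List.cons.injEq] at h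
          have hd0 : d' ≠ 0 := (hA' d' (by simp [oddSeq])).1
          exact hd0 h.2.1.symm
      · -- both big : peel 2s :: 0
        rw [expand_big c r h4, expand_big c' r' h4'] at h
        simp only [List.cons.injEq] at h
        obtain ⟨hs, _, hrest⟩ := h
        have hlen2 : (expandSeq (c - 2 * c.sign) r).length ≤ N := by
          rw [expand_big c r h4] at hlen
          simp only [List.length_cons] at hlen; omega
        have hne : c - 2 * c.sign ≠ 0 ∧ Even (c - 2 * c.sign) := by
          constructor
          · rcases lt_trichotomy c 0 with hsg | hsg | hsg
            · rw [Int.sign_eq_neg_one_of_neg hsg]; omega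
            · exact absurd hsg hc0
            · rw [Int.sign_eq_one_of_pos hsg]; omega
          · have : Even (2 * c.sign) := ⟨c.sign, by ring⟩
            exact hce.sub this
        have hne' : c' - 2 * c'.sign ≠ 0 ∧ Even (c' - 2 * c'.sign) := by
          constructor
          · rcases lt_trichotomy c' 0 with hsg | hsg | hsg
            · rw [Int.sign_eq_neg_one_of_neg hsg]; omega
            · exact absurd hsg hc0'
            · rw [Int.sign_eq_one_of_pos hsg]; omega
          · have : Even (2 * c'.sign) := ⟨c'.sign, by ring⟩
            exact hce'.sub this
        have hA2 := oddSeq_replace hA hne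
        have hA2' := oddSeq_replace hA' hne'
        obtain ⟨hc2, hr2⟩ := ih _ _ r r' hlen2 hA2 hA2' hrest
        exact ⟨by omega, hr2⟩

/-- The expansion map is injective on odd-length lists of nonzero even integers: if two such
lists `A = (c_1, d_1, …, d_n, c_{n+1})` and `A' = (c'_1, d'_1, …, d'_m, c'_{m+1})` have the
same expanded form `A_e = A'_e`, then `n = m` and `A = A'`.  (Equivalently, contracting the
expanded form recovers the original sequence: `(A_e)_c = A`.) -/
theorem expand_injective (c c' : ℤ) (r r' : List (ℤ × ℤ))
    (hA : ∀ x ∈ oddSeq c r, x ≠ 0 ∧ Even x)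
    (hA' : ∀ x ∈ oddSeq c' r', x ≠ 0 ∧ Even x)
    (h : expandSeq c r = expandSeq c' r') :
    c = c' ∧ r = r' := by
  exact aux (expandSeq c r).length c c' r r' le_rfl hA hA' h
end
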